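/- Let P be a reflexive polytope in M_ℝ and let Π(P) = {P_1, …, P_r} be a nef-partition. Then Π(P) splits as a direct sum over ℤ, Π(P) = Π(P_{I_1}) ⊕ ⋯ ⊕ Π(P_{I_k}), if and only if the associated Cayley polytope P_1 * ⋯ * P_r is a ℤ-join of its faces corresponding to the Cayley polytopes of the sub-nef-partitions {P_i : i ∈ I_1}, …, {P_i : i ∈ I_k}. -/

import Mathlib

open Pointwise
open scoped Classical

noncomputable section

namespace GorST

/-- Points of `d`-dimensional real space. -/
abbrev Pt (n : ℕ) := Fin n → ℝ

/-- A point of the standard lattice `ℤ^n ⊂ ℝ^n`. -/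
def isLatticePt {n : ℕ} (x : Pt n) : Prop := ∀ i, ∃ k : ℤ, x i = (k : ℝ)

/-- The standard lattice `ℤ^n` inside `ℝ^n`. -/
def stdL (n : ℕ) : Set (Pt n) := {x | isLatticePt x}

/-- The standard pairing (dot product). -/
def dot {n : ℕ} (x y : Pt n) : ℝ := ∑ i, x i * y i

/-- `S` is a lattice polytope with respect to the lattice `L`:
it is the convex hull of finitely many points of `L`.  (The empty set is allowed.) -/
def IsLat {n : ℕ} (L S : Set (Pt n)) : Prop :=
  ∃ V : Finset (Pt n), ↑V ⊆ L ∧ S = convexHull ℝ (V : Set (Pt n))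

/-- `F` is a face of `S` (exposed face; this includes the improper faces `∅` and `S`). -/
def IsFaceOf {n : ℕ} (F S : Set (Pt n)) : Prop := IsExposed ℝ S F

/-- Dimension of a polytope, with `dim ∅ = -1`. -/
def dimP {n : ℕ} (S : Set (Pt n)) : ℤ :=
  if S = ∅ then -1 else (Module.finrank ℝ (affineSpan ℝ S).direction : ℤ)

/-- Dimension as a natural number (for nonempty polytopes). -/
def dimNat {n : ℕ} (S : Set (Pt n)) : ℕ := Module.finrank ℝ (affineSpan ℝ S).direction

/-- Number of points of `L` in the `k`-th dilate of `S` (Ehrhart counting function). -/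
def ehr {n : ℕ} (L S : Set (Pt n)) (k : ℕ) : ℕ := (L ∩ (k : ℝ) • S).ncard

/-- The `h^*`-polynomial of a lattice polytope `S` with respect to the lattice `L`,
i.e. the numerator of the Ehrhart series `1 + ∑_{m ≥ 1} |L ∩ mS| t^m = h^*(t)/(1-t)^{dim S + 1}`;
its coefficients are given by `h^*_i = ∑_j (-1)^j (dim S + 1 choose j) ehr(i - j)`.
By convention `h^*_∅ = 1`. -/
def hStarL {n : ℕ} (L S : Set (Pt n)) : Polynomial ℤ :=
  if S = ∅ then 1
  else
    ∑ i ∈ Finset.range (dimNat S + 1),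
      Polynomial.C
          (∑ j ∈ Finset.range (i + 1),
            (-1 : ℤ) ^ j * ((dimNat S + 1).choose j : ℤ) * (ehr L S (i - j) : ℤ)) *
        Polynomial.X ^ i

/-- The degree of a lattice polytope: the degree of its `h^*`-polynomial. -/
def degL {n : ℕ} (L S : Set (Pt n)) : ℕ := (hStarL L S).natDegree

/-- The codegree of a lattice polytope: `dim S + 1 - deg S` (and `0` for `∅`). -/
def codegL {n : ℕ} (L S : Set (Pt n)) : ℤ :=
  if S = ∅ then 0 else dimP S + 1 - degL L S

/-- Truncation of a polynomial to its terms of degree `< k`. -/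
def truncLT (k : ℕ) (p : Polynomial ℤ) : Polynomial ℤ :=
  ∑ i ∈ Finset.range k, Polynomial.C (p.coeff i) * Polynomial.X ^ i

/-- The `g`-polynomial of the interval `[F, G]` in the (Eulerian) face poset of the
polytope `G`, computed with the recursion of Stanley:
`g = h = 1` in rank `0`, `h([F,G],t) = ∑_{F < H ≤ G} (t-1)^{ρ(H)-1} g([H,G],t)` and
`g([F,G],t) = τ_{< e/2}((1-t) h([F,G],t))` in rank `e > 0`.
The first argument is a fuel parameter (any value `≥` the rank of the interval
gives the correct answer). -/
def gAux {n : ℕ} : ℕ → Set (Pt n) → Set (Pt n) → Polynomial ℤ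
  | 0, _, _ => 1
  | fuel + 1, F, G =>
    if F = G then 1
    else
      truncLT (((dimP G - dimP F).toNat + 1) / 2)
        ((1 - Polynomial.X) *
          ∑ᶠ H ∈ {H : Set (Pt n) | IsFaceOf H G ∧ F ⊆ H ∧ F ≠ H},
            (Polynomial.X - 1) ^ ((dimP H - dimP F - 1).toNat) * gAux fuel H G)

/-- The `g`-polynomial `g([F,G], t)` of the interval of faces between `F` and `G`. -/
def gPoly {n : ℕ} (F G : Set (Pt n)) : Polynomial ℤ := gAux (dimNat G + 2) F G

/-- The polynomial `S̃(S, t) = ∑_{∅ ≤ F ≤ S} (-1)^{dim S - dim F} h^*_F(t) g([F,S],t)`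
of Borisov and Mavlyutov, with respect to the lattice `L`. -/
def StildeL {n : ℕ} (L S : Set (Pt n)) : Polynomial ℤ :=
  ∑ᶠ F ∈ {F : Set (Pt n) | IsFaceOf F S},
    (-1 : Polynomial ℤ) ^ ((dimP S - dimP F).toNat) * (hStarL L F * gPoly F S)

/-- The lattice dual to `L ∩ W` inside the subspace `W` (under the dot product pairing). -/
def dualLatIn {n : ℕ} (L : Set (Pt n)) (W : Submodule ℝ (Pt n)) : Set (Pt n) :=
  {y | y ∈ W ∧ ∀ x ∈ L ∩ (W : Set (Pt n)), ∃ k : ℤ, dot y x = (k : ℝ)}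

/-- `S` is a reflexive polytope with respect to the lattice `L` (inside its linear span):
`S` is a lattice polytope w.r.t. `L ∩ span S`, `0` lies in its (relative) interior, and the
dual polytope `{y ∈ span S | ⟨y,x⟩ ≥ -1 for all x ∈ S}` is a lattice polytope w.r.t. the
dual lattice. -/
def IsReflexiveL {n : ℕ} (L S : Set (Pt n)) : Prop :=
  IsLat (L ∩ (Submodule.span ℝ S : Set (Pt n))) S ∧
  (0 : Pt n) ∈ intrinsicInterior ℝ S ∧
  IsLat (dualLatIn L (Submodule.span ℝ S))
    {y | y ∈ Submodule.span ℝ S ∧ ∀ x ∈ S, -1 ≤ dot y x}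

/-- `m₀` witnesses that `S` is Gorenstein of index `r` w.r.t. `L`: `m₀` is a lattice point
in the (relative) interior of `r S` and `r S - m₀` is reflexive. -/
def GorWitness {n : ℕ} (L S : Set (Pt n)) (r : ℕ) (m₀ : Pt n) : Prop :=
  m₀ ∈ L ∧ m₀ ∈ intrinsicInterior ℝ ((r : ℝ) • S) ∧
  IsReflexiveL L ((fun x => x - m₀) '' ((r : ℝ) • S))

/-- `S` is a Gorenstein polytope of index `r` with respect to the lattice `L`:
`r S` contains a unique interior lattice point `m₀`, and `r S - m₀` is reflexive. -/
def IsGorensteinL {n : ℕ} (L S : Set (Pt n)) (r : ℕ) : Prop :=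
  IsLat L S ∧ 0 < r ∧ (∃ m₀, GorWitness L S r m₀) ∧
  ∀ m₁ m₂,
    (m₁ ∈ L ∧ m₁ ∈ intrinsicInterior ℝ ((r : ℝ) • S)) →
    (m₂ ∈ L ∧ m₂ ∈ intrinsicInterior ℝ ((r : ℝ) • S)) → m₁ = m₂

/-- `S` is a Gorenstein polytope (of some index) w.r.t. `L`; by convention `∅` is Gorenstein. -/
def IsGorensteinPoly {n : ℕ} (L S : Set (Pt n)) : Prop :=
  S = ∅ ∨ ∃ r, IsGorensteinL L S r

/-- Embedding at height 1: `x ↦ (x, 1)`. -/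
def emb1 {n : ℕ} : Pt n → Pt (n + 1) := fun x => Fin.snoc x 1

/-- Embedding at height 0: `x ↦ (x, 0)`. -/
def emb0 {n : ℕ} : Pt n → Pt (n + 1) := fun x => Fin.snoc x 0

/-- The linear span of `S × {1}`: the span of the cone `C_S` over `S`. -/
def Wspan {n : ℕ} (S : Set (Pt n)) : Submodule ℝ (Pt (n + 1)) :=
  Submodule.span ℝ (emb1 '' S)

/-- The dual Gorenstein polytope `S^×` of a Gorenstein polytope `S` of index `r` with
unique interior lattice point `m₀` of `r S`: the support polytope
`{y ∈ C_S^∨ | ⟨y, (m₀, r)⟩ = 1}` of the dual of the cone `C_S` over `S × {1}`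
(taken inside the linear span of `S × {1}`, using the dot product as the pairing). -/
def gorDual {n : ℕ} (S : Set (Pt n)) (r : ℕ) (m₀ : Pt n) : Set (Pt (n + 1)) :=
  {y | y ∈ Wspan S ∧ (∀ x ∈ S, 0 ≤ dot y (emb1 x)) ∧ dot y (Fin.snoc m₀ (r : ℝ)) = 1}

/-- The face `F^*` of the dual Gorenstein polytope `S^×` corresponding to the face `F` of
`S`:  `F^* = {y ∈ S^× | ⟨y, (x,1)⟩ = 0 for all x ∈ F}`. -/
def faceDual {n : ℕ} (S : Set (Pt n)) (r : ℕ) (m₀ : Pt n) (F : Set (Pt n)) :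
    Set (Pt (n + 1)) :=
  {y | y ∈ gorDual S r m₀ ∧ ∀ x ∈ F, dot y (emb1 x) = 0}

/-- The lattice dual (under the dot product) to the lattice `ℤ^{n+1} ∩ span(S × {1})`;
this is the lattice with respect to which `S^×` is a lattice polytope. -/
def dualLatOf {n : ℕ} (S : Set (Pt n)) : Set (Pt (n + 1)) :=
  {y | y ∈ Wspan S ∧ ∀ x, isLatticePt x → x ∈ Wspan S → ∃ k : ℤ, dot y x = (k : ℝ)}

/-- The field `ℚ(u,v)` of rational functions in two variables. -/
abbrev KK : Type := FractionRing (MvPolynomial (Fin 2) ℚ)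

/-- The rational function `u`. -/
def uu : KK := algebraMap (MvPolynomial (Fin 2) ℚ) KK (MvPolynomial.X 0)

/-- The rational function `v`. -/
def vv : KK := algebraMap (MvPolynomial (Fin 2) ℚ) KK (MvPolynomial.X 1)

/-- The stringy `E`-function of a Gorenstein polytope `S` of index `r` (with `m₀` the unique
interior lattice point of `r S`):
`E_st(S; u,v) = (uv)^{-r} ∑_{∅ ≤ F ≤ S} (-u)^{dim F + 1} S̃(F, u⁻¹ v) S̃(F^*, uv) ∈ ℚ(u,v)`. -/
def Est {n : ℕ} (S : Set (Pt n)) (r : ℕ) (m₀ : Pt n) : KK :=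
  (uu * vv) ^ (-(r : ℤ)) *
    ∑ᶠ F ∈ {F : Set (Pt n) | IsFaceOf F S},
      (-uu) ^ (dimP F + 1) * Polynomial.aeval (uu⁻¹ * vv) (StildeL (stdL n) F) *
        Polynomial.aeval (uu * vv) (StildeL (dualLatOf S) (faceDual S r m₀ F))

/-- An element of `ℚ(u,v)` "is a polynomial": it lies in `ℤ[u,v]`. -/
def IsPolyEst (e : KK) : Prop :=
  ∃ p : MvPolynomial (Fin 2) ℤ,
    e = MvPolynomial.aeval (fun i : Fin 2 => if i = 0 then uu else vv) p

/-- `S` is a join of its faces `F` and `G`. -/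
def IsJoin {n : ℕ} (S F G : Set (Pt n)) : Prop :=
  IsFaceOf F S ∧ IsFaceOf G S ∧ S = convexHull ℝ (F ∪ G) ∧ dimP F + dimP G = dimP S - 1

/-- `S` and `T` are isomorphic lattice polytopes (with respect to the standard lattice):
there is an affine transformation of the ambient space mapping the lattice onto itself
and `S` onto `T`. -/
def IsoLat {n : ℕ} (S T : Set (Pt n)) : Prop :=
  ∃ A : Pt n ≃ᵃ[ℝ] Pt n, (∀ x, isLatticePt x ↔ isLatticePt (A x)) ∧ A '' S = T

/-- The Cayley polytope `F * G` of two polytopes: the convex hull of `F × {1}` and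
`G × {0}`. -/
def cayley2 {n : ℕ} (F G : Set (Pt n)) : Set (Pt (n + 1)) :=
  convexHull ℝ (emb1 '' F ∪ emb0 '' G)

/-- `S` is a Cayley join of its faces `F` and `G`:
`dim F + dim G = dim S - 1` and the Cayley polytope `F * G` is isomorphic (as a lattice
polytope) to `S` (embedded at height 0). -/
def IsCayleyJoin {n : ℕ} (S F G : Set (Pt n)) : Prop :=
  IsFaceOf F S ∧ IsFaceOf G S ∧ dimP F + dimP G = dimP S - 1 ∧
  IsoLat (cayley2 F G) (emb0 '' S)

/-- `S` is a ℤ-join of its faces `F` and `G`: `S` is the convex hull of `F ∪ G` and the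
natural map `M(F) ⊕ M(G) → M ⊕ ℤ` is an isomorphism, where `M(F) = lin(F × {1}) ∩ (M ⊕ ℤ)`;
i.e. every lattice point of `M ⊕ ℤ` is uniquely the sum of a lattice point in `lin(F × {1})`
and a lattice point in `lin(G × {1})`. -/
def IsZJoin {n : ℕ} (S F G : Set (Pt n)) : Prop :=
  IsFaceOf F S ∧ IsFaceOf G S ∧ S = convexHull ℝ (F ∪ G) ∧
  ∀ x : Pt (n + 1), isLatticePt x →
    ∃! p : Pt (n + 1) × Pt (n + 1),
      (isLatticePt p.1 ∧ p.1 ∈ Wspan F) ∧ (isLatticePt p.2 ∧ p.2 ∈ Wspan G) ∧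
        x = p.1 + p.2

/-- The points of the standard lattice lying in a subspace `W`. -/
def latIn {n : ℕ} (W : Submodule ℝ (Pt n)) : Set (Pt n) := {x | isLatticePt x ∧ x ∈ W}

/-- `S` (with lattice `LS`) and `T` (with lattice `LT`) are dual Gorenstein polytopes,
with respect to the dot product pairing: the pairing between the spans is perfect, the
lattices are dual to each other, and the cones over `S` and `T` are dual reflexive
Gorenstein cones, each being the support polytope of the dual of the other (cut out by the
interior lattice points `nf` resp. `mm`). -/
def IsDualGorPair {n : ℕ} (LS LT S T : Set (Pt n)) : Prop :=
  (∀ x ∈ Submodule.span ℝ S, (∀ y ∈ Submodule.span ℝ T, dot x y = 0) → x = 0) ∧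
  (∀ y ∈ Submodule.span ℝ T, (∀ x ∈ Submodule.span ℝ S, dot x y = 0) → y = 0) ∧
  IsLat LS S ∧ IsLat LT T ∧
  LT = {y | y ∈ Submodule.span ℝ T ∧ ∀ x ∈ LS, ∃ k : ℤ, dot x y = (k : ℝ)} ∧
  LS = {x | x ∈ Submodule.span ℝ S ∧ ∀ y ∈ LT, ∃ k : ℤ, dot x y = (k : ℝ)} ∧
  ∃ nf ∈ LT, ∃ mm ∈ LS,
    (∀ x ∈ S, dot nf x = 1) ∧ (∀ y ∈ T, dot mm y = 1) ∧
    T = {y | y ∈ Submodule.span ℝ T ∧ (∀ x ∈ S, 0 ≤ dot x y) ∧ dot mm y = 1} ∧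
    S = {x | x ∈ Submodule.span ℝ S ∧ (∀ y ∈ T, 0 ≤ dot x y) ∧ dot nf x = 1}

/-- Orthogonal projection onto the orthogonal complement of `U` (w.r.t. the dot product);
this realizes the quotient of the ambient space by `U`. -/
def perpProj {m : ℕ} (U : Submodule ℝ (Pt m)) : Pt m → Pt m :=
  fun x =>
    (WithLp.linearEquiv 2 ℝ (Fin m → ℝ))
      ((Submodule.orthogonalProjectionOnto
          (Submodule.map (WithLp.linearEquiv 2 ℝ (Fin m → ℝ)).symm.toLinearMap U)ᗮ
          ((WithLp.linearEquiv 2 ℝ (Fin m → ℝ)).symm x) : EuclideanSpace ℝ (Fin m)))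

/-- The `i`-th "unit vector" used for Cayley polytopes: the standard basis vector `e_i` of
`ℤ^{r-1}` for `i < r - 1`, and `0` for `i = r - 1` (the last coordinate is deleted). -/
def unitVec (r : ℕ) (i : Fin r) : Pt (r - 1) := fun j => if (j : ℕ) = (i : ℕ) then 1 else 0

/-- The embedding `x ↦ (x, e_i)` used in the definition of Cayley polytopes. -/
def cayleyEmb {d r : ℕ} (i : Fin r) : Pt d → Pt (d + (r - 1)) :=
  fun x => Fin.append x (unitVec r i)

/-- The Cayley polytope `P_1 * ⋯ * P_r` of a family of polytopes in `ℝ^d`, as a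
(full-dimensional) lattice polytope in `ℝ^{d + r - 1}`. -/
def cayleyFam {d r : ℕ} (Q : Fin r → Set (Pt d)) : Set (Pt (d + (r - 1))) :=
  convexHull ℝ (⋃ i, cayleyEmb i '' Q i)

/-- The face of the Cayley polytope corresponding to a subfamily indexed by `I`. -/
def subCayley {d r : ℕ} (Q : Fin r → Set (Pt d)) (I : Finset (Fin r)) :
    Set (Pt (d + (r - 1))) :=
  convexHull ℝ (⋃ i ∈ I, cayleyEmb i '' Q i)

/-- `S` is an irreducible Gorenstein polytope: it is a nonempty Gorenstein polytope of some
index `r`, with no proper face `F` (`∅ ≠ F ≠ S`) such that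
`codeg F + codeg F^* = r`. -/
def IsIrredGor {n : ℕ} (S : Set (Pt n)) : Prop :=
  S.Nonempty ∧ ∃ r, IsGorensteinL (stdL n) S r ∧
    ∀ m₀, GorWitness (stdL n) S r m₀ →
      ∀ F, IsFaceOf F S → F ≠ ∅ → F ≠ S →
        codegL (stdL n) F + codegL (dualLatOf S) (faceDual S r m₀ F) ≠ (r : ℤ)

/-- `Q` is a nef-partition of the reflexive polytope `P ⊂ ℝ^d`: each `Q i` is a nonempty
lattice polytope containing `0` and `P = Q 1 + ⋯ + Q r` (Minkowski sum) is a reflexive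
polytope of dimension `d`. -/
def IsNefPartition {d r : ℕ} (Q : Fin r → Set (Pt d)) (P : Set (Pt d)) : Prop :=
  (∀ i, (Q i).Nonempty ∧ IsLat (stdL d) (Q i) ∧ (0 : Pt d) ∈ Q i) ∧
  P = ∑ i, Q i ∧ IsReflexiveL (stdL d) P ∧ dimP P = (d : ℤ)

/-- The nef-partition `Q` is irreducible: no nonempty proper subfamily has `0` in the
relative interior of its Minkowski sum. -/
def IsIrredNef {d r : ℕ} (Q : Fin r → Set (Pt d)) : Prop :=
  ∀ I : Finset (Fin r), I.Nonempty → I ≠ Finset.univ →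
    (0 : Pt d) ∉ intrinsicInterior ℝ (∑ i ∈ I, Q i)

/-- `S` is a ℤ-join of the faces `F j`: `S` is the convex hull of their union, and every
lattice point of `M ⊕ ℤ` decomposes uniquely as a sum of lattice points in the spans
`lin(F j × {1})`. -/
def IsMultiZJoin {n k : ℕ} (S : Set (Pt n)) (F : Fin k → Set (Pt n)) : Prop :=
  (∀ j, IsFaceOf (F j) S) ∧ S = convexHull ℝ (⋃ j, F j) ∧
  ∀ x : Pt (n + 1), isLatticePt x →
    ∃! f : Fin k → Pt (n + 1),
      (∀ j, isLatticePt (f j) ∧ f j ∈ Wspan (F j)) ∧ x = ∑ j, f j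

/-- The nef-partition `Q` splits as a direct sum over `ℤ` with respect to the partition
`I` of the index set: each subfamily sums to a reflexive polytope (w.r.t. the induced
lattice), and the lattice `M` is the direct sum of the lattices `M_j = lin(P_{I_j}) ∩ M`. -/
def SplitsOverZ {d r k : ℕ} (Q : Fin r → Set (Pt d)) (I : Fin k → Finset (Fin r)) : Prop :=
  (∀ j, IsReflexiveL (stdL d) (∑ i ∈ I j, Q i)) ∧
  ∀ x : Pt d, isLatticePt x →
    ∃! f : Fin k → Pt d,
      (∀ j, isLatticePt (f j) ∧ f j ∈ Submodule.span ℝ ((∑ i ∈ I j, Q i : Set (Pt d)))) ∧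
        x = ∑ j, f j

/-!
The linear isomorphism `(x, c) ↦ (x, c₀, …, c_{r-2}, ∑ cᵢ)` from `ℝ^d × ℝ^r` onto
`ℝ^{d+r-1} × ℝ` identifies the standard lattices and sends `(x, eᵢ)` to `(x, eᵢ, 1)`, the
generators of the cone over the Cayley polytope; as `0 ∈ P_i` for all `i`, it carries
`lin(P_J) × ℝ^J` onto the span of the cone over the face `P_J` of the Cayley polytope. Since
`ℤ^r = ⊕ⱼ ℤ^{I_j}` for any partition, the Cayley polytope is a `ℤ`-join of these faces exactly
when `M = ⊕ⱼ (lin(P_{I_j}) ∩ M)`.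

Such a splitting of `M` yields linear projections `πⱼ` fixing `lin(P_{I_j})` and mapping
`P = ∑ⱼ P_{I_j}` onto `P_{I_j}`. Through a retraction of this kind, the interior point `0` of
`P` and the lattice vertices of the dual of `P` descend to `P_{I_j}`, which is therefore
reflexive.
-/

open Submodule (span subset_span span_le span_mono)

lemma isLatticePt_iff {n : ℕ} {x : Pt n} :
    isLatticePt x ↔ ∀ i, x i ∈ (Int.castRingHom ℝ).range := by
  simp [isLatticePt, eq_comm]

lemma isLatticePt_zero {n : ℕ} : isLatticePt (0 : Pt n) := fun _ => ⟨0, by simp⟩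

lemma isLatticePt_sum {n : ℕ} {ι : Type*} {s : Finset ι} {f : ι → Pt n}
    (h : ∀ i ∈ s, isLatticePt (f i)) : isLatticePt (∑ i ∈ s, f i) := by
  rw [isLatticePt_iff]
  intro q
  rw [Finset.sum_apply]
  exact sum_mem fun i hi => isLatticePt_iff.1 (h i hi) q

lemma isLatticePt_smul {n : ℕ} {a : ℝ} {x : Pt n} (ha : a ∈ (Int.castRingHom ℝ).range)
    (hx : isLatticePt x) : isLatticePt (a • x) :=
  isLatticePt_iff.2 fun q => mul_mem ha (isLatticePt_iff.1 hx q)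

lemma isLatticePt_single {n : ℕ} (l : Fin n) : isLatticePt (Pi.single l 1 : Pt n) :=
  fun i => by
    rcases eq_or_ne i l with rfl | h
    exacts [⟨1, by simp⟩, ⟨0, by simp [h]⟩]

lemma zero_mem_finsetSum {ι α : Type*} [AddCommMonoid α] {s : Finset ι} {f : ι → Set α}
    (h0 : ∀ i ∈ s, (0 : α) ∈ f i) : (0 : α) ∈ ∑ i ∈ s, f i := by
  simpa using Set.finsetSum_mem_finsetSum s f 0 h0

lemma mem_finsetSum_of_mem {ι α : Type*} [AddCommMonoid α] {s : Finset ι} {f : ι → Set α}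
    {i : ι} {x : α} (h0 : ∀ i ∈ s, (0 : α) ∈ f i) (hi : i ∈ s) (hx : x ∈ f i) :
    x ∈ ∑ i ∈ s, f i := by
  classical
  simpa [Finset.sum_pi_single', hi] using
    Set.finsetSum_mem_finsetSum s f (Pi.single i x) fun i' hi' => by
      rcases eq_or_ne i' i with rfl | h
      · simpa using hx
      · simpa [h] using h0 i' hi'

lemma IsLat.finsetSum {n : ℕ} {ι : Type*} (s : Finset ι) {Q : ι → Set (Pt n)}
    (hQ : ∀ i, IsLat (stdL n) (Q i)) : IsLat (stdL n) (∑ i ∈ s, Q i) := by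
  classical
  choose V hVL hV using hQ
  refine ⟨∑ i ∈ s, V i, fun v hv => ?_, ?_⟩
  · rw [Finset.coe_sum] at hv
    obtain ⟨g, hg, rfl⟩ := (Set.mem_finsetSum _ _ _).1 hv
    exact isLatticePt_sum fun i hi => hVL i (hg hi)
  · rw [Finset.coe_sum, convexHull_sum]
    exact Finset.sum_congr rfl fun i _ => hV i

lemma IsLat.span_le_span_inter {n : ℕ} {L S : Set (Pt n)} (h : IsLat L S) :
    span ℝ S ≤ span ℝ (L ∩ span ℝ S) := by
  obtain ⟨V, hVL, rfl⟩ := h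
  exact span_le.2 <| convexHull_min
    (fun v hv => subset_span ⟨hVL hv, subset_span (subset_convexHull ℝ _ hv)⟩)
    (Submodule.convex _)

section LatticeSplitting

variable {R E F ι : Type*} [Semiring R] [AddCommMonoid E] [Module R E] [AddCommMonoid F]
  [Module R F] [Fintype ι]

def IsLatticeSplitting (Λ : Set E) (U : ι → Submodule R E) : Prop :=
  ∀ x ∈ Λ, ∃! f : ι → E, (∀ j, f j ∈ Λ ∧ f j ∈ U j) ∧ x = ∑ j, f j

variable {Λ : Set E} {U : ι → Submodule R E}

lemma IsLatticeSplitting.map (h : IsLatticeSplitting Λ U) (e : E ≃ₗ[R] F) :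
    IsLatticeSplitting (e '' Λ) fun j => (U j).map (e : E →ₗ[R] F) := by
  rintro _ ⟨x, hx, rfl⟩
  obtain ⟨f, ⟨hf, rfl⟩, huniq⟩ := h x hx
  refine ⟨fun j => e (f j),
    ⟨fun j => ⟨Set.mem_image_of_mem e (hf j).1, Submodule.mem_map_of_mem (hf j).2⟩,
      map_sum e _ _⟩,
    fun g ⟨hg, hsum⟩ => ?_⟩
  have hg' : ∀ j, e.symm (g j) ∈ Λ ∧ e.symm (g j) ∈ U j := fun j =>
    ⟨by simpa [e.image_eq_preimage_symm] using (hg j).1, (Submodule.mem_map_equiv _).1 (hg j).2⟩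
  have := huniq (fun j => e.symm (g j)) ⟨hg', by rw [← map_sum, ← hsum, e.symm_apply_apply]⟩
  funext j
  rw [← this, e.apply_symm_apply]

lemma isLatticeSplitting_map_iff (e : E ≃ₗ[R] F) :
    IsLatticeSplitting (e '' Λ) (fun j => (U j).map (e : E →ₗ[R] F)) ↔
      IsLatticeSplitting Λ U := by
  refine ⟨fun h => ?_, fun h => h.map e⟩
  convert h.map e.symm
  · rw [Set.image_image]; simp
  · exact ((Submodule.map_symm_eq_iff e).2 rfl).symm

variable {T : ι → Submodule R F} {Λ' : Set F}

lemma IsLatticeSplitting.prod (h : IsLatticeSplitting Λ U) (h' : IsLatticeSplitting Λ' T) :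
    IsLatticeSplitting (Λ ×ˢ Λ') fun j => (U j).prod (T j) := by
  rintro ⟨x, y⟩ ⟨hx, hy⟩
  obtain ⟨f, ⟨hf, rfl⟩, hfu⟩ := h x hx
  obtain ⟨g, ⟨hg, rfl⟩, hgu⟩ := h' y hy
  refine ⟨fun j => (f j, g j),
    ⟨fun j => ⟨⟨(hf j).1, (hg j).1⟩, (hf j).2, (hg j).2⟩, ?_⟩, ?_⟩
  · ext <;> simp [Prod.fst_sum, Prod.snd_sum]
  · rintro p ⟨hp, hsum⟩
    have h1 := hfu (fun j => (p j).1)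
      ⟨fun j => ⟨(hp j).1.1, (hp j).2.1⟩,
        by simpa [Prod.fst_sum] using congrArg Prod.fst hsum⟩
    have h2 := hgu (fun j => (p j).2)
      ⟨fun j => ⟨(hp j).1.2, (hp j).2.2⟩,
        by simpa [Prod.snd_sum] using congrArg Prod.snd hsum⟩
    funext j
    exact Prod.ext (congrFun h1 j) (congrFun h2 j)

lemma IsLatticeSplitting.of_prod (h : IsLatticeSplitting (Λ ×ˢ Λ') fun j => (U j).prod (T j))
    (h0 : 0 ∈ Λ') : IsLatticeSplitting Λ U := by
  intro x hx
  obtain ⟨p, ⟨hp, hsum⟩, hpu⟩ := h (x, 0) ⟨hx, h0⟩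
  refine ⟨fun j => (p j).1, ⟨fun j => ⟨(hp j).1.1, (hp j).2.1⟩, ?_⟩, ?_⟩
  · simpa [Prod.fst_sum] using congrArg Prod.fst hsum
  · rintro f ⟨hf, rfl⟩
    have := hpu (fun j => (f j, 0))
      ⟨fun j => ⟨⟨(hf j).1, h0⟩, (hf j).2, zero_mem _⟩,
        by ext <;> simp [Prod.fst_sum, Prod.snd_sum]⟩
    funext j
    rw [← this]

end LatticeSplitting

def coordSubspace {ι : Type*} (J : Finset ι) : Submodule ℝ (ι → ℝ) :=
  Submodule.pi (↑J)ᶜ fun _ => ⊥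

lemma mem_coordSubspace {ι : Type*} {J : Finset ι} {c : ι → ℝ} :
    c ∈ coordSubspace J ↔ ∀ i ∉ J, c i = 0 := by
  simp [coordSubspace, Submodule.mem_pi]

lemma isLatticeSplitting_coordSubspace {n : ℕ} {ι : Type*} [Fintype ι]
    (I : ι → Finset (Fin n))
    (hdisj : ∀ j j', j ≠ j' → Disjoint (I j) (I j'))
    (hcover : Finset.univ.biUnion I = Finset.univ) :
    IsLatticeSplitting (stdL n) fun j => coordSubspace (I j) := by
  have hblock : ∀ i, ∃ j, i ∈ I j := fun i =>
    (Finset.mem_biUnion.1 (hcover.symm ▸ Finset.mem_univ i)).imp fun _ => And.right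
  have hother : ∀ {i j j'}, i ∈ I j → j' ≠ j → i ∉ I j' := fun hi hj hi' =>
    Finset.disjoint_left.1 (hdisj _ _ hj) hi' hi
  intro c hc
  refine ⟨fun j i => if i ∈ I j then c i else 0, ⟨fun j => ⟨fun i => ?_, ?_⟩, ?_⟩, ?_⟩
  · dsimp only
    split_ifs
    exacts [hc i, isLatticePt_zero i]
  · exact mem_coordSubspace.2 fun i hi => if_neg hi
  · funext i
    obtain ⟨j, hj⟩ := hblock i
    rw [Finset.sum_apply, Finset.sum_eq_single j (fun j' _ hj' => if_neg (hother hj hj'))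
      (by simp), if_pos hj]
  · rintro g ⟨hg, rfl⟩
    funext j i
    by_cases hi : i ∈ I j
    · rw [if_pos hi, Finset.sum_apply, Finset.sum_eq_single j
        (fun j' _ hj' => mem_coordSubspace.1 (hg j').2 i (hother hi hj')) (by simp)]
    · rw [if_neg hi, mem_coordSubspace.1 (hg j).2 i hi]

lemma IsLatticeSplitting.exists_proj {n : ℕ} {ι : Type*} [Fintype ι] [DecidableEq ι]
    {U : ι → Submodule ℝ (Pt n)} (h : IsLatticeSplitting (stdL n) U)
    (hU : ∀ j, U j ≤ span ℝ (stdL n ∩ U j)) :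
    ∃ π : ι → Pt n →ₗ[ℝ] Pt n,
      ∀ j j', ∀ v ∈ U j', π j v = (Pi.single j' v : ι → Pt n) j := by
  choose b hb using fun l : Fin n => (h _ (isLatticePt_single l)).exists
  let π j : Pt n →ₗ[ℝ] Pt n := (Pi.basisFun ℝ (Fin n)).constr ℝ fun l => b l j
  have hπ : ∀ j v, π j v = ∑ l, v l • b l j := fun j v => by simp [π]
  have hlat : ∀ j', ∀ v ∈ stdL n ∩ U j', (fun j => π j v) = Pi.single j' v := by
    rintro j' v ⟨hvL, hvU⟩
    refine (h v hvL).unique ⟨fun j => ⟨?_, ?_⟩, ?_⟩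
      ⟨fun j => ⟨?_, ?_⟩, by simp [Finset.sum_pi_single']⟩
    · rw [hπ]
      exact isLatticePt_sum fun l _ => isLatticePt_smul (isLatticePt_iff.1 hvL l) ((hb l).1 j).1
    · rw [hπ]
      exact sum_mem fun l _ => Submodule.smul_mem _ _ ((hb l).1 j).2
    · simp only [hπ]
      rw [Finset.sum_comm]
      simp_rw [← Finset.smul_sum, ← (hb _).2]
      funext q
      simp [Finset.sum_apply, Pi.single_apply]
    · rcases eq_or_ne j j' with rfl | hj
      · simpa using hvL
      · rw [Pi.single_eq_of_ne hj]
        exact isLatticePt_zero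
    · rcases eq_or_ne j j' with rfl | hj
      · simpa using hvU
      · simp [hj]
  refine ⟨π, fun j j' => ?_⟩
  have : U j' ≤
      LinearMap.eqLocus (π j) (LinearMap.proj j ∘ₗ LinearMap.single ℝ (fun _ => Pt n) j') :=
    (hU j').trans (span_le.2 fun v hv => congrFun (hlat j' v hv) j)
  exact fun v hv => this hv

section CayleyCoordinates

-- `Fin.castSucc_natAdd` is removed from the `simp` set below: it rewrites `(natAdd d i).castSucc`
-- to `natAdd d i.castSucc`, which `Fin.snoc_castSucc` no longer recognizes.
def cayleyEquiv (d m : ℕ) : (Pt d × Pt (m + 1)) ≃ₗ[ℝ] Pt (d + m + 1) where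
  toFun p := Fin.snoc (Fin.append p.1 fun i => p.2 i.castSucc) (∑ i, p.2 i)
  invFun v := (fun l => v (Fin.castAdd m l).castSucc,
    Fin.snoc (fun i => v (Fin.natAdd d i).castSucc)
      (v (Fin.last _) - ∑ i, v (Fin.natAdd d i).castSucc))
  map_add' p q := by
    funext v
    induction v using Fin.lastCases with
    | last => simp [Finset.sum_add_distrib]
    | cast v => induction v using Fin.addCases <;> simp [-Fin.castSucc_natAdd]
  map_smul' a p := by
    funext v
    induction v using Fin.lastCases with
    | last => simp [Finset.mul_sum]
    | cast v => induction v using Fin.addCases <;> simp [-Fin.castSucc_natAdd]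
  left_inv p := by
    ext l
    · simp
    · induction l using Fin.lastCases with
      | last => simp [Fin.sum_univ_castSucc, -Fin.castSucc_natAdd]
      | cast l => simp [-Fin.castSucc_natAdd]
  right_inv v := by
    funext q
    induction q using Fin.lastCases with
    | last => simp [Fin.sum_univ_castSucc, -Fin.castSucc_natAdd]
    | cast q => induction q using Fin.addCases <;> simp [-Fin.castSucc_natAdd]

variable {n d m : ℕ}

lemma cayleyEmb_eq_append (i : Fin (m + 1)) (x : Pt d) :
    cayleyEmb i x = Fin.append x fun i' : Fin m => (Pi.single i 1 : Pt (m + 1)) i'.castSucc := by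
  show Fin.append x (unitVec (m + 1) i : Fin m → ℝ) = _
  congr 1
  funext j
  simp [unitVec, Pi.single_apply, Fin.ext_iff]

lemma cayleyEquiv_single (i : Fin (m + 1)) (x : Pt d) :
    cayleyEquiv d m (x, Pi.single i 1) = emb1 (cayleyEmb i x) := by
  rw [cayleyEmb_eq_append]
  simp [cayleyEquiv, emb1]

lemma isLatticePt_cayleyEquiv_iff {p : Pt d × Pt (m + 1)} :
    isLatticePt (cayleyEquiv d m p) ↔ isLatticePt p.1 ∧ isLatticePt p.2 := by
  simp only [isLatticePt_iff]
  constructor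
  · intro h
    refine ⟨fun l => by simpa [cayleyEquiv] using h (Fin.castAdd m l).castSucc, fun i => ?_⟩
    induction i using Fin.lastCases with
    | last =>
      have hsum : p.2 (Fin.last m) = (∑ i, p.2 i) - ∑ i : Fin m, p.2 i.castSucc := by
        simp [Fin.sum_univ_castSucc]
      rw [hsum]
      refine sub_mem (by simpa [cayleyEquiv] using h (Fin.last _)) (sum_mem fun i _ => ?_)
      simpa [cayleyEquiv, -Fin.castSucc_natAdd] using h (Fin.natAdd d i).castSucc
    | cast i => simpa [cayleyEquiv, -Fin.castSucc_natAdd] using h (Fin.natAdd d i).castSucc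
  · rintro ⟨h1, h2⟩ q
    induction q using Fin.lastCases with
    | last => simpa [cayleyEquiv] using sum_mem fun i _ => h2 i
    | cast q =>
      induction q using Fin.addCases <;> simp [cayleyEquiv, h1, h2, -Fin.castSucc_natAdd]

lemma image_cayleyEquiv_stdL :
    cayleyEquiv d m '' (stdL d ×ˢ stdL (m + 1)) = stdL (d + m + 1) := by
  ext v
  rw [LinearEquiv.image_eq_preimage_symm, Set.mem_preimage]
  have := isLatticePt_cayleyEquiv_iff (p := (cayleyEquiv d m).symm v)
  rw [LinearEquiv.apply_symm_apply] at this
  exact this.symm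

lemma convex_preimage_emb1 (W : Submodule ℝ (Pt (n + 1))) :
    Convex ℝ (emb1 ⁻¹' (W : Set (Pt (n + 1)))) := by
  intro x hx y hy a b _ _ hab
  have : emb1 (a • x + b • y) = a • emb1 x + b • emb1 y := by
    funext q
    induction q using Fin.lastCases with
    | last => simp [emb1, hab]
    | cast q => simp [emb1]
  simpa [Set.mem_preimage, this] using W.add_mem (W.smul_mem a hx) (W.smul_mem b hy)

lemma Wspan_convexHull (s : Set (Pt n)) : Wspan (convexHull ℝ s) = Wspan s :=
  le_antisymm
    (span_le.2 <| Set.image_subset_iff.2 <|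
      convexHull_min (Set.image_subset_iff.1 subset_span) (convex_preimage_emb1 _))
    (span_mono (Set.image_mono (subset_convexHull ℝ s)))

lemma span_cayleyGenerators (Q : Fin (m + 1) → Set (Pt d)) (h0 : ∀ i, (0 : Pt d) ∈ Q i)
    (J : Finset (Fin (m + 1))) :
    span ℝ (⋃ i ∈ J, (fun x => (x, (Pi.single i 1 : Pt (m + 1)))) '' Q i) =
      (span ℝ (∑ i ∈ J, Q i)).prod (coordSubspace J) := by
  set G := ⋃ i ∈ J, (fun x => (x, (Pi.single i 1 : Pt (m + 1)))) '' Q i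
  have hG : ∀ i ∈ J, ∀ x ∈ Q i, (x, (Pi.single i 1 : Pt (m + 1))) ∈ span ℝ G :=
    fun i hi x hx => subset_span (Set.mem_biUnion hi ⟨x, hx, rfl⟩)
  apply le_antisymm
  · rw [span_le]
    simp only [G, Set.iUnion_subset_iff, Set.image_subset_iff]
    intro i hi x hx
    refine ⟨subset_span (mem_finsetSum_of_mem (fun i _ => h0 i) hi hx),
      mem_coordSubspace.2 fun i' hi' => ?_⟩
    exact Pi.single_eq_of_ne (ne_of_mem_of_not_mem hi hi').symm _
  · have hfst : span ℝ (∑ i ∈ J, Q i) ≤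
        (span ℝ G).comap (LinearMap.inl ℝ (Pt d) (Pt (m + 1))) := by
      rw [span_le]
      intro y hy
      obtain ⟨g, hg, rfl⟩ := (Set.mem_finsetSum _ _ _).1 hy
      have : ((∑ i ∈ J, g i, 0) : Pt d × Pt (m + 1)) =
          ∑ i ∈ J, ((g i, Pi.single i 1) - (0, Pi.single i 1)) := by
        ext <;> simp [Prod.fst_sum, Prod.snd_sum]
      simp only [Submodule.mem_comap, LinearMap.inl_apply, SetLike.mem_coe, this]
      exact Submodule.sum_mem _ fun i hi =>
        Submodule.sub_mem _ (hG i hi _ (hg hi)) (hG i hi _ (h0 i))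
    rintro ⟨x, c⟩ ⟨hx, hc⟩
    have hc' : ((0, c) : Pt d × Pt (m + 1)) = ∑ i ∈ J, c i • (0, Pi.single i 1) := by
      ext i'
      · simp [Prod.fst_sum]
      · by_cases hi' : i' ∈ J
        · simp [Prod.snd_sum, Finset.sum_apply, Pi.single_apply, hi']
        · rw [mem_coordSubspace.1 hc i' hi']
          simp [Prod.snd_sum, Finset.sum_apply, Pi.single_apply, hi']
    rw [show ((x, c) : Pt d × Pt (m + 1)) = (x, 0) + (0, c) by simp, hc']
    exact Submodule.add_mem _ (hfst hx)
      (Submodule.sum_mem _ fun i hi => Submodule.smul_mem _ _ (hG i hi 0 (h0 i)))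

lemma Wspan_subCayley (Q : Fin (m + 1) → Set (Pt d)) (h0 : ∀ i, (0 : Pt d) ∈ Q i)
    (J : Finset (Fin (m + 1))) :
    Wspan (subCayley Q J) =
      ((span ℝ (∑ i ∈ J, Q i)).prod (coordSubspace J)).map
        (cayleyEquiv d m : Pt d × Pt (m + 1) →ₗ[ℝ] Pt (d + m + 1)) := by
  rw [subCayley, Wspan_convexHull, Wspan, ← span_cayleyGenerators Q h0, ← Submodule.span_image]
  congr 1
  simp only [Set.image_iUnion, Set.image_image, LinearEquiv.coe_coe, cayleyEquiv_single]

lemma isLatticeSplitting_Wspan_subCayley_iff {d m : ℕ} {ι : Type*} [Fintype ι]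
    (Q : Fin (m + 1) → Set (Pt d)) (I : ι → Finset (Fin (m + 1)))
    (h0 : ∀ i, (0 : Pt d) ∈ Q i) (hdisj : ∀ j j', j ≠ j' → Disjoint (I j) (I j'))
    (hcover : Finset.univ.biUnion I = Finset.univ) :
    IsLatticeSplitting (stdL (d + m + 1)) (fun j => Wspan (subCayley Q (I j))) ↔
      IsLatticeSplitting (stdL d) fun j => span ℝ (∑ i ∈ I j, Q i) := by
  simp only [Wspan_subCayley Q h0, ← image_cayleyEquiv_stdL, isLatticeSplitting_map_iff]
  exact ⟨fun h => h.of_prod isLatticePt_zero,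
    fun h => h.prod (isLatticeSplitting_coordSubspace I hdisj hcover)⟩

end CayleyCoordinates

lemma isExposed_convexHull_union {E : Type*} [AddCommGroup E] [Module ℝ E] [TopologicalSpace E]
    {s t : Set E} (l : E →L[ℝ] ℝ) (c : ℝ) (hs : ∀ x ∈ s, l x = c)
    (ht : ∀ x ∈ t, l x < c) :
    IsExposed ℝ (convexHull ℝ (s ∪ t)) (convexHull ℝ s) := by
  rintro ⟨x₀, hx₀⟩
  refine ⟨l, ?_⟩
  have hl := l.toLinearMap.isLinear
  have hs' : ∀ x ∈ convexHull ℝ s, l x = c := fun x hx =>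
    convexHull_min hs (convex_hyperplane hl c) hx
  have ht' : ∀ x ∈ convexHull ℝ t, l x < c := fun x hx =>
    convexHull_min ht (convex_halfSpace_lt hl c) hx
  have hle : ∀ x ∈ convexHull ℝ (s ∪ t), l x ≤ c := fun x hx =>
    convexHull_min (Set.union_subset (fun x hx => (hs x hx).le) fun x hx => (ht x hx).le)
      (convex_halfSpace_le hl c) hx
  have hsub : convexHull ℝ s ⊆ convexHull ℝ (s ∪ t) := convexHull_mono Set.subset_union_left
  ext x
  refine ⟨fun hx => ⟨hsub hx, fun y hy => (hle y hy).trans (hs' x hx).ge⟩,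
    fun ⟨hx, hmax⟩ => ?_⟩
  have hlx : l x = c :=
    le_antisymm (hle x hx) ((hs' x₀ hx₀).symm.trans_le (hmax x₀ (hsub hx₀)))
  rcases t.eq_empty_or_nonempty with rfl | htne
  · simpa using hx
  rw [convexHull_union (convexHull_nonempty_iff.1 ⟨x₀, hx₀⟩) htne] at hx
  obtain ⟨a, ha, b, hb, α, β, hα, hβ, hαβ, rfl⟩ := mem_convexJoin.1 hx
  rw [map_add, map_smul, map_smul, hs' a ha, smul_eq_mul, smul_eq_mul] at hlx
  have hβ0 : β = 0 := by
    have : β * (c - l b) = 0 := by linear_combination c * hαβ - hlx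
    exact (mul_eq_zero.1 this).resolve_right (sub_pos.2 (ht' b hb)).ne'
  simpa [hβ0, show α = 1 by linarith] using ha

section CayleyFaces

variable {d m : ℕ}

lemma exists_clm_cayleyEmb (w : Fin (m + 1) → ℝ) :
    ∃ l : Pt (d + m) →L[ℝ] ℝ,
      ∀ i (x : Pt d), l (cayleyEmb i x) = w i - w (Fin.last m) := by
  refine ⟨∑ i' : Fin m, (w i'.castSucc - w (Fin.last m)) •
    ContinuousLinearMap.proj (R := ℝ) (φ := fun _ => ℝ) (Fin.natAdd d i'), fun i x => ?_⟩
  rw [cayleyEmb_eq_append]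
  induction i using Fin.lastCases with
  | last => simp [Fin.castSucc_ne_last]
  | cast i => simp [Pi.single_apply]

lemma subCayley_isFace (Q : Fin (m + 1) → Set (Pt d)) (J : Finset (Fin (m + 1))) :
    IsFaceOf (subCayley Q J) (cayleyFam Q) := by
  classical
  obtain ⟨l, hl⟩ := exists_clm_cayleyEmb (d := d) fun i => if i ∈ J then (1 : ℝ) else 0
  have hunion : ⋃ i, cayleyEmb i '' Q i =
      (⋃ i ∈ J, cayleyEmb i '' Q i) ∪ ⋃ i ∈ Jᶜ, cayleyEmb (r := m + 1) i '' Q i := by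
    ext p
    simp only [Set.mem_union, Set.mem_iUnion, Finset.mem_compl, exists_prop]
    exact ⟨fun ⟨i, h⟩ => (em (i ∈ J)).imp (⟨i, ·, h⟩) (⟨i, ·, h⟩),
      by rintro (⟨i, -, h⟩ | ⟨i, -, h⟩) <;> exact ⟨i, h⟩⟩
  unfold IsFaceOf cayleyFam subCayley
  rw [hunion]
  refine isExposed_convexHull_union l (1 - if Fin.last m ∈ J then 1 else 0) ?_ ?_
  · simp only [Set.mem_iUnion, Set.mem_image]
    rintro _ ⟨i, hi, x, -, rfl⟩
    simp [hl, hi]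
  · simp only [Set.mem_iUnion, Set.mem_image, Finset.mem_compl]
    rintro _ ⟨i, hi, x, -, rfl⟩
    simp [hl, hi]

lemma cayleyFam_eq_convexHull_iUnion_subCayley {ι : Type*} [Fintype ι]
    (Q : Fin (m + 1) → Set (Pt d)) (I : ι → Finset (Fin (m + 1)))
    (hcover : Finset.univ.biUnion I = Finset.univ) :
    cayleyFam Q = convexHull ℝ (⋃ j, subCayley Q (I j)) := by
  refine le_antisymm (convexHull_mono ?_)
    (convexHull_min (Set.iUnion_subset fun j => convexHull_mono ?_) (convex_convexHull ℝ _))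
  · rintro p hp
    obtain ⟨i, hp⟩ := Set.mem_iUnion.1 hp
    obtain ⟨j, -, hj⟩ := Finset.mem_biUnion.1 (hcover.symm ▸ Finset.mem_univ i)
    exact Set.mem_iUnion.2 ⟨j, subset_convexHull ℝ _ (Set.mem_biUnion hj hp)⟩
  · exact Set.iUnion₂_subset fun i _ => Set.subset_iUnion (fun i => cayleyEmb i '' Q i) i

end CayleyFaces

section Reflexive

variable {n : ℕ}

lemma mem_intrinsicInterior_iff_ball {E : Type*} [NormedAddCommGroup E] [NormedSpace ℝ E]
    {s : Set E} {x : E} :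
    x ∈ intrinsicInterior ℝ s ↔
      x ∈ affineSpan ℝ s ∧
        ∃ ε > 0, ∀ z ∈ affineSpan ℝ s, dist z x < ε → z ∈ s := by
  rw [mem_intrinsicInterior]
  constructor
  · rintro ⟨y, hy, rfl⟩
    obtain ⟨ε, hε, hball⟩ := Metric.mem_nhds_iff.1 (mem_interior_iff_mem_nhds.1 hy)
    exact ⟨y.2, ε, hε, fun z hz hzy =>
      hball (show (⟨z, hz⟩ : affineSpan ℝ s) ∈ Metric.ball y ε from hzy)⟩
  · rintro ⟨hx, ε, hε, hball⟩
    exact ⟨⟨x, hx⟩, mem_interior_iff_mem_nhds.2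
      (Metric.mem_nhds_iff.2 ⟨ε, hε, fun z hz => hball z z.2 hz⟩), rfl⟩

lemma exists_orthogonalProjection_dot (U : Submodule ℝ (Pt n)) :
    ∃ ψ : Pt n →ₗ[ℝ] Pt n, ∀ v, ψ v ∈ U ∧ ∀ u ∈ U, dot (ψ v) u = dot v u := by
  let e : Pt n ≃ₗ[ℝ] EuclideanSpace ℝ (Fin n) := (WithLp.linearEquiv 2 ℝ (Pt n)).symm
  let K := U.map (e : Pt n →ₗ[ℝ] EuclideanSpace ℝ (Fin n))
  have hdot : ∀ a b, dot a b = inner ℝ (e a) (e b) := fun a b => by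
    simp [e, EuclideanSpace.inner_eq_star_dotProduct, dot, dotProduct, mul_comm]
  refine ⟨e.symm.toLinearMap ∘ₗ K.starProjection.toLinearMap ∘ₗ e.toLinearMap,
    fun v => ⟨?_, fun u hu => ?_⟩⟩
  · simpa [K, Submodule.mem_map_equiv] using K.starProjection_apply_mem (e v)
  · have hu' : e u ∈ K := Submodule.mem_map_of_mem hu
    simp only [LinearMap.comp_apply, LinearEquiv.coe_coe, ContinuousLinearMap.coe_coe]
    rw [hdot, hdot, e.apply_symm_apply, K.inner_starProjection_left_eq_right,
      Submodule.starProjection_eq_self_iff.2 hu']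

lemma eq_of_forall_dot_eq {U : Submodule ℝ (Pt n)} {u u' : Pt n} (hu : u ∈ U) (hu' : u' ∈ U)
    (h : ∀ x ∈ U, dot u x = dot u' x) : u = u' := by
  rw [← sub_eq_zero, ← dotProduct_self_eq_zero, sub_dotProduct]
  exact sub_eq_zero.2 (h _ (U.sub_mem hu hu'))

lemma dot_vecMul_toMatrix' (π : Pt n →ₗ[ℝ] Pt n) (y x : Pt n) :
    dot (Matrix.vecMul y (LinearMap.toMatrix' π)) x = dot y (π x) := by
  change dotProduct (Matrix.vecMul y _) x = dotProduct y (π x)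
  rw [← Matrix.dotProduct_mulVec, LinearMap.toMatrix'_mulVec]

def polarIn (S : Set (Pt n)) : Set (Pt n) :=
  {y | y ∈ span ℝ S ∧ ∀ x ∈ S, -1 ≤ dot y x}

variable {S P : Set (Pt n)} {π : Pt n →ₗ[ℝ] Pt n}

lemma zero_mem_intrinsicInterior_of_retract (h0P : (0 : Pt n) ∈ intrinsicInterior ℝ P)
    (hSP : S ⊆ P) (hπP : ∀ x ∈ P, π x ∈ S) (hπS : ∀ x ∈ span ℝ S, π x = x) :
    (0 : Pt n) ∈ intrinsicInterior ℝ S := by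
  obtain ⟨-, ε, hε, hball⟩ := mem_intrinsicInterior_iff_ball.1 h0P
  have h0S : (0 : Pt n) ∈ S := by simpa using hπP 0 (intrinsicInterior_subset h0P)
  refine mem_intrinsicInterior_iff_ball.2 ⟨mem_affineSpan ℝ h0S, ε, hε, fun z hz hzε => ?_⟩
  rw [← hπS z (affineSpan_subset_span hz)]
  exact hπP z (hball z (affineSpan_mono ℝ hSP hz) hzε)

lemma polarIn_eq_image_of_retract (hSP : S ⊆ P) (hπP : ∀ x ∈ P, π x ∈ S)
    (hπS : ∀ x ∈ span ℝ S, π x = x) {ψ : Pt n →ₗ[ℝ] Pt n}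
    (hψ : ∀ v, ψ v ∈ span ℝ S ∧ ∀ u ∈ span ℝ S, dot (ψ v) u = dot v u) :
    polarIn S = ψ '' polarIn P := by
  apply Set.Subset.antisymm
  · rintro y ⟨hy, hyS⟩
    obtain ⟨ψP, hψP⟩ := exists_orthogonalProjection_dot (span ℝ P)
    -- the functional `x ↦ dot y (π x)`, represented in `span P`, is a preimage of `y`
    set w := ψP (Matrix.vecMul y (LinearMap.toMatrix' π))
    have hw : ∀ x ∈ span ℝ P, dot w x = dot y (π x) := fun x hx => by
      rw [(hψP _).2 x hx, dot_vecMul_toMatrix']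
    refine ⟨w, ⟨(hψP _).1, fun x hx => ?_⟩, ?_⟩
    · rw [hw x (subset_span hx)]
      exact hyS _ (hπP x hx)
    · refine eq_of_forall_dot_eq (hψ w).1 hy fun x hx => ?_
      rw [(hψ w).2 x hx, hw x (span_mono hSP hx), hπS x hx]
  · rintro _ ⟨w, ⟨-, hw⟩, rfl⟩
    refine ⟨(hψ w).1, fun x hx => ?_⟩
    rw [(hψ w).2 x (subset_span hx)]
    exact hw x (hSP hx)

lemma IsReflexiveL.of_retract {L : Set (Pt n)} (hP : IsReflexiveL L P) (hS : IsLat L S)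
    (hSP : S ⊆ P) (π : Pt n →ₗ[ℝ] Pt n) (hπP : ∀ x ∈ P, π x ∈ S)
    (hπS : ∀ x ∈ span ℝ S, π x = x) : IsReflexiveL L S := by
  obtain ⟨-, h0P, W, hWL, hW⟩ := hP
  obtain ⟨V, hVL, hV⟩ := hS
  obtain ⟨ψ, hψ⟩ := exists_orthogonalProjection_dot (span ℝ S)
  refine ⟨⟨V, fun v hv => ⟨hVL hv, subset_span (hV ▸ subset_convexHull ℝ _ hv)⟩, hV⟩,
    zero_mem_intrinsicInterior_of_retract h0P hSP hπP hπS, W.image ψ, fun v hv => ?_, ?_⟩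
  · obtain ⟨w, hw, rfl⟩ := Finset.mem_image.1 hv
    refine ⟨(hψ w).1, fun x ⟨hxL, hxS⟩ => ?_⟩
    rw [(hψ w).2 x hxS]
    exact (hWL hw).2 x ⟨hxL, span_mono hSP hxS⟩
  · change polarIn S = _
    rw [polarIn_eq_image_of_retract hSP hπP hπS hψ, show polarIn P = _ from hW,
      LinearMap.image_convexHull, Finset.coe_image]

end Reflexive

lemma isReflexiveL_sum_of_isLatticeSplitting {d r : ℕ} {ι : Type*} [Fintype ι]
    (Q : Fin r → Set (Pt d)) (I : ι → Finset (Fin r)) (hQ : ∀ i, IsLat (stdL d) (Q i))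
    (h0 : ∀ i, (0 : Pt d) ∈ Q i) (hdisj : ∀ j j', j ≠ j' → Disjoint (I j) (I j'))
    (hcover : Finset.univ.biUnion I = Finset.univ) (hP : IsReflexiveL (stdL d) (∑ i, Q i))
    (hsplit : IsLatticeSplitting (stdL d) fun j => span ℝ (∑ i ∈ I j, Q i)) (j : ι) :
    IsReflexiveL (stdL d) (∑ i ∈ I j, Q i) := by
  classical
  have hPS : ∑ i, Q i = ∑ j, ∑ i ∈ I j, Q i := by
    rw [← Finset.sum_biUnion fun j _ j' _ h => hdisj j j' h, hcover]
  obtain ⟨π, hπ⟩ := hsplit.exists_proj fun j => (IsLat.finsetSum _ hQ).span_le_span_inter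
  refine hP.of_retract (IsLat.finsetSum _ hQ) ?_ (π j) ?_ fun x hx => by simpa using hπ j j x hx
  · rw [hPS]
    exact fun x hx => mem_finsetSum_of_mem (fun j _ => zero_mem_finsetSum fun i _ => h0 i)
      (Finset.mem_univ j) hx
  · rw [hPS]
    intro x hx
    obtain ⟨g, hg, rfl⟩ := (Set.mem_finsetSum _ _ _).1 hx
    rw [map_sum, Finset.sum_congr rfl fun j' _ =>
      hπ j j' (g j') (subset_span (hg (Finset.mem_univ j'))), Finset.sum_pi_single]
    simpa using hg (Finset.mem_univ j)

theorem stmt13_general {d r k : ℕ} (hr : 0 < r) (Q : Fin r → Set (Pt d)) (P : Set (Pt d))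
    (hnef : IsNefPartition Q P)
    (I : Fin k → Finset (Fin r))
    (hdisj : ∀ j j', j ≠ j' → Disjoint (I j) (I j'))
    (hcover : Finset.univ.biUnion I = Finset.univ) :
    SplitsOverZ Q I ↔ IsMultiZJoin (cayleyFam Q) (fun j => subCayley Q (I j)) := by
  obtain ⟨m, rfl⟩ : ∃ m, r = m + 1 := ⟨r - 1, (Nat.succ_pred_eq_of_pos hr).symm⟩
  obtain ⟨hQ, rfl, hP, -⟩ := hnef
  have h0 : ∀ i, (0 : Pt d) ∈ Q i := fun i => (hQ i).2.2
  have hsplit := isLatticeSplitting_Wspan_subCayley_iff Q I h0 hdisj hcover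
  constructor
  · rintro ⟨-, hZ⟩
    exact ⟨fun j => subCayley_isFace Q (I j), cayleyFam_eq_convexHull_iUnion_subCayley Q I hcover,
      hsplit.2 hZ⟩
  · rintro ⟨-, -, hZ⟩
    exact ⟨isReflexiveL_sum_of_isLatticeSplitting Q I (fun i => (hQ i).2.1) h0 hdisj hcover hP
      (hsplit.1 hZ), hsplit.1 hZ⟩

/-- Let `P` be a reflexive polytope and `Π(P) = {P_1, …, P_r}` a
nef-partition.  Then `Π(P)` splits as a direct sum over `ℤ` with respect to a partition
`I_1, …, I_k` of the index set if and only if the associated Cayley polytope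
`P_1 * ⋯ * P_r` is a ℤ-join of its faces corresponding to the Cayley polytopes of the
sub-nef-partitions `{P_i : i ∈ I_j}`. -/
theorem stmt13 {d r k : ℕ} (hr : 0 < r) (Q : Fin r → Set (Pt d)) (P : Set (Pt d))
    (hnef : IsNefPartition Q P)
    (I : Fin k → Finset (Fin r)) (hne : ∀ j, (I j).Nonempty)
    (hdisj : ∀ j j', j ≠ j' → Disjoint (I j) (I j'))
    (hcover : Finset.univ.biUnion I = Finset.univ) :
    SplitsOverZ Q I ↔ IsMultiZJoin (cayleyFam Q) (fun j => subCayley Q (I j)) :=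
  stmt13_general hr Q P hnef I hdisj hcover

end GorST
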